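/- arXiv:2404.10521 — 2 statements merged into one kernel-verified Lean document; each statement's English description precedes it below -/
import Mathlib

section
/- Let A and B be commutative unitary rings with A a subring of B. If (a₁,…,aₙ) is an irreducible λ-quiddity over A, then (a₁,…,aₙ) is also an irreducible λ-quiddity over B; consequently the maximal size of an irreducible λ-quiddity over A is at most the maximal size of an irreducible λ-quiddity over B. -/
/-- The matrix `[[a, -1], [1, 0]]`. -/
def mMat {A : Type*} [CommRing A] (a : A) : Matrix (Fin 2) (Fin 2) A := !![a, -1; 1, 0]

/-- `M_n(a₁, …, aₙ) = mMat aₙ * ⋯ * mMat a₁`, for the tuple given as a list `[a₁, …, aₙ]`. -/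
def mProd {A : Type*} [CommRing A] (l : List A) : Matrix (Fin 2) (Fin 2) A :=
  ((l.map mMat).reverse).prod

/-- The sum `(a₁,…,aₙ) ⊕ (b₁,…,b_m) = (a₁+b_m, a₂,…,a_{n−1}, aₙ+b₁, b₂,…,b_{m−1})`. -/
def oplus {A : Type*} [CommRing A] (a b : List A) : List A :=
  (a.headD 0 + b.getLastD 0) ::
    (a.dropLast.tail ++ (a.getLastD 0 + b.headD 0) :: b.dropLast.tail)

/-- Two tuples are equivalent if one is a cyclic rotation of the other or of its reversal. -/
def TupEquiv {A : Type*} (a b : List A) : Prop :=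
  (∃ k, b = a.rotate k) ∨ (∃ k, b = a.reverse.rotate k)

/-- A λ-quiddity over `R ⊆ A`: all entries lie in `R` and `M_n(a₁,…,aₙ) = ± Id`. -/
def IsQuiddity {A : Type*} [CommRing A] (R : Set A) (c : List A) : Prop :=
  (∀ x ∈ c, x ∈ R) ∧ (mProd c = 1 ∨ mProd c = -1)

/-- A λ-quiddity `c` over `R` is reducible if `c ∼ a ⊕ b` with `a ∈ R^m`, `m ≥ 3`,
and `b` a λ-quiddity over `R` of size `l ≥ 3`. -/
def IsReducible {A : Type*} [CommRing A] (R : Set A) (c : List A) : Prop :=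
  ∃ a b : List A, 3 ≤ a.length ∧ 3 ≤ b.length ∧ (∀ x ∈ a, x ∈ R) ∧
    IsQuiddity R b ∧ TupEquiv c (oplus a b)

/-- An irreducible λ-quiddity over `R`: a λ-quiddity of size `≥ 3` which is not reducible. -/
def IrreducibleQuiddity {A : Type*} [CommRing A] (R : Set A) (c : List A) : Prop :=
  IsQuiddity R c ∧ 3 ≤ c.length ∧ ¬ IsReducible R c

/-- The continuant `K_i(a₁,…,a_i)`, determinant of the tridiagonal matrix with diagonal
`a₁,…,a_i` and off-diagonal entries `1`; `K₀ = 1`. -/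
def cont {A : Type*} [CommRing A] : List A → A
  | [] => 1
  | [a] => a
  | a :: b :: l => a * cont (b :: l) - cont l

/-!
If `c.map f ∼ a ⊕ b` over `B` with `b` a λ-quiddity, every entry of `a ⊕ b` lies in the image
of `A`. Writing `b = (u, p, v)`, the identity `mMat v * M(p) * mMat u = ±Id` expresses `u` and
`v` as `±` entries of `M(p)`, so they lie in the image too, and then so do the two glued
entries of `a`. Hence the decomposition lifts to `A`, where injectivity of `f` makes it a
reduction of `c`.
-/

section Lists

variable {α β : Type*}

lemma List.exists_eq_cons_append_singleton {l : List α} (h : 2 ≤ l.length) :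
    ∃ x m y, l = x :: (m ++ [y]) := by
  obtain _ | ⟨x, t⟩ := l
  · simp at h
  obtain rfl | ⟨m, y, rfl⟩ := List.eq_nil_or_concat t
  · simp at h
  · exact ⟨x, m, y, by rw [List.concat_eq_append]⟩

lemma TupEquiv.subset {c d : List α} (h : TupEquiv c d) : d ⊆ c := by
  rcases h with ⟨k, rfl⟩ | ⟨k, rfl⟩ <;> intro x hx <;> simpa using hx

lemma TupEquiv.of_map {f : α → β} (hf : Function.Injective f) {c d : List α}
    (h : TupEquiv (c.map f) (d.map f)) : TupEquiv c d := by
  rcases h with ⟨k, hk⟩ | ⟨k, hk⟩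
  · exact .inl ⟨k, List.map_injective_iff.2 hf (by rw [hk, List.map_rotate])⟩
  · exact .inr ⟨k, List.map_injective_iff.2 hf (by rw [hk, List.map_rotate, List.map_reverse])⟩

end Lists

section Ring

variable {A : Type*} [CommRing A]

lemma mProd_cons (a : A) (l : List A) : mProd (a :: l) = mProd l * mMat a := by
  simp [mProd]

lemma mProd_append_singleton (l : List A) (a : A) : mProd (l ++ [a]) = mMat a * mProd l := by
  simp [mProd]

lemma oplus_cons_append_singleton (x y u v : A) (m p : List A) :
    oplus (x :: (m ++ [y])) (u :: (p ++ [v])) = (x + v) :: (m ++ (y + u) :: p) := by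
  rw [← List.cons_append, ← List.cons_append]
  simp only [oplus, List.getLastD_concat, List.dropLast_concat, List.tail_cons]
  rfl

lemma eq_of_mProd_cons_append_eq_smul_one {u v ε : A} {p : List A}
    (hε : ε * ε = 1) (h : mProd (u :: (p ++ [v])) = ε • 1) :
    u = ε * mProd p 0 1 ∧ v = -(ε * mProd p 1 0) := by
  rw [mProd_cons, mProd_append_singleton, Matrix.eta_fin_two (mProd p), mMat, mMat,
    Matrix.mul_fin_two, Matrix.mul_fin_two] at h
  have h11 := congrFun (congrFun h 1) 1
  have h10 := congrFun (congrFun h 1) 0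
  have h01 := congrFun (congrFun h 0) 1
  simp only [Matrix.of_apply, Matrix.cons_val', Matrix.cons_val_zero, Matrix.cons_val_one,
    Matrix.cons_val_fin_one, Matrix.smul_apply, Matrix.one_fin_two, smul_eq_mul] at h11 h10 h01
  exact ⟨by linear_combination (-ε) * h10 - ε * u * h11 - u * hε,
    by linear_combination ε * h01 - ε * v * h11 - v * hε⟩

end Ring

section Map

variable {A B : Type*} [CommRing A] [CommRing B] (f : A →+* B)

lemma mMat_map (a : A) : (mMat a).map f = mMat (f a) := by
  ext i j
  fin_cases i <;> fin_cases j <;> simp [mMat]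

lemma mProd_map (l : List A) : mProd (l.map f) = (mProd l).map f := by
  induction l with
  | nil => exact (Matrix.map_one f f.map_zero f.map_one).symm
  | cons a l ih => rw [List.map_cons, mProd_cons, mProd_cons, ih, ← mMat_map, Matrix.map_mul]

lemma isQuiddity_univ_map_iff (hf : Function.Injective f) (l : List A) :
    IsQuiddity Set.univ (l.map f) ↔ IsQuiddity Set.univ l := by
  have hinj := Matrix.map_injective (m := Fin 2) (n := Fin 2) hf
  have map_one : (1 : Matrix (Fin 2) (Fin 2) A).map f = 1 := Matrix.map_one f f.map_zero f.map_one
  simp only [IsQuiddity, Set.mem_univ, implies_true, true_and]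
  rw [mProd_map, ← hinj.eq_iff, ← hinj.eq_iff (b := -1), map_one, Matrix.map_neg _ (map_neg f),
    map_one]

lemma oplus_map (a b : List A) : (oplus a b).map f = oplus (a.map f) (b.map f) := by
  have headD_map (l : List A) : (l.map f).headD 0 = f (l.headD 0) := by cases l <;> simp
  have getLastD_map (l : List A) : (l.map f).getLastD 0 = f (l.getLastD 0) := by
    rw [List.getLastD_eq_getLast?, List.getLastD_eq_getLast?, List.getLast?_map]
    cases l.getLast? <;> simp
  simp only [oplus, List.map_cons, List.map_append, map_add, headD_map, getLastD_map,
    List.map_tail, List.map_dropLast]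

end Map

section Subring

variable {A : Type*} [CommRing A] {S : Subring A}

lemma mProd_apply_mem {l : List A} (hl : ∀ x ∈ l, x ∈ S) (i j : Fin 2) : mProd l i j ∈ S := by
  obtain ⟨l, rfl⟩ : l ∈ Set.range (List.map ((↑) : S → A)) := by
    rwa [Set.range_list_map_coe]
  exact mProd_map S.subtype l ▸ (mProd l i j).2

lemma forall_mem_of_forall_mem_oplus {a b : List A} (ha : 2 ≤ a.length) (hb : 2 ≤ b.length)
    (hbq : mProd b = 1 ∨ mProd b = -1) (hab : ∀ z ∈ oplus a b, z ∈ S) :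
    (∀ z ∈ a, z ∈ S) ∧ ∀ z ∈ b, z ∈ S := by
  obtain ⟨x, m, y, rfl⟩ := List.exists_eq_cons_append_singleton ha
  obtain ⟨u, p, v, rfl⟩ := List.exists_eq_cons_append_singleton hb
  simp only [oplus_cons_append_singleton, List.forall_mem_cons, List.forall_mem_append]
    at hab ⊢
  obtain ⟨hxv, hm, hyu, hp⟩ := hab
  obtain ⟨ε, hε, hεS, hbε⟩ : ∃ ε : A, ε * ε = 1 ∧ ε ∈ S ∧ mProd (u :: (p ++ [v])) = ε • 1 := by
    rcases hbq with h | h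
    · exact ⟨1, mul_one 1, S.one_mem, by rw [h, one_smul]⟩
    · exact ⟨-1, by ring, S.neg_mem S.one_mem, by rw [h, neg_one_smul]⟩
  obtain ⟨rfl, rfl⟩ := eq_of_mProd_cons_append_eq_smul_one hε hbε
  have hu := S.mul_mem hεS (mProd_apply_mem hp 0 1)
  have hv := S.neg_mem (S.mul_mem hεS (mProd_apply_mem hp 1 0))
  exact ⟨⟨by simpa using S.sub_mem hxv hv, hm, by simpa using S.sub_mem hyu hu⟩,
    hu, hp, hv, by simp⟩

end Subring

theorem IrreducibleQuiddity.map {A B : Type*} [CommRing A] [CommRing B] (f : A →+* B)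
    (hf : Function.Injective f) {c : List A} (hc : IrreducibleQuiddity Set.univ c) :
    IrreducibleQuiddity Set.univ (c.map f) := by
  obtain ⟨hq, hlen, hred⟩ := hc
  refine ⟨(isQuiddity_univ_map_iff f hf c).2 hq, by simpa using hlen, ?_⟩
  rintro ⟨a, b, ha, hb, -, hbq, hequiv⟩
  have hrange : ∀ z ∈ oplus a b, z ∈ f.range := fun z hz => by
    obtain ⟨w, -, rfl⟩ := List.mem_map.1 (hequiv.subset hz)
    exact f.mem_range_self w
  obtain ⟨ha', hb'⟩ := forall_mem_of_forall_mem_oplus (by omega) (by omega) hbq.2 hrange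
  obtain ⟨a, rfl⟩ : a ∈ Set.range (List.map f) := by rwa [Set.range_list_map]
  obtain ⟨b, rfl⟩ : b ∈ Set.range (List.map f) := by rwa [Set.range_list_map]
  rw [← oplus_map] at hequiv
  exact hred ⟨a, b, by simpa using ha, by simpa using hb, fun _ _ => trivial,
    (isQuiddity_univ_map_iff f hf b).1 hbq, hequiv.of_map hf⟩

/-- If `A` is a subring of `B` (given by an injective ring homomorphism), then any
irreducible λ-quiddity over `A` is an irreducible λ-quiddity over `B`; consequently the
maximal size of an irreducible λ-quiddity over `A` is at most the one over `B`. -/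
theorem stmt17 {A B : Type*} [CommRing A] [CommRing B] (f : A →+* B)
    (hf : Function.Injective f) :
    (∀ c : List A, IrreducibleQuiddity (Set.univ : Set A) c →
      IrreducibleQuiddity (Set.univ : Set B) (c.map f)) ∧
    sSup {n : ℕ∞ | ∃ c : List A,
        IrreducibleQuiddity (Set.univ : Set A) c ∧ (c.length : ℕ∞) = n} ≤
      sSup {n : ℕ∞ | ∃ c : List B,
        IrreducibleQuiddity (Set.univ : Set B) c ∧ (c.length : ℕ∞) = n} := by
  refine ⟨fun c hc => hc.map f hf, sSup_le_sSup ?_⟩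
  rintro n ⟨c, hc, rfl⟩
  exact ⟨c.map f, hc.map f hf, by simp⟩
end

section
/- Every irreducible λ-quiddity over the finite field 𝔽₉ with 9 elements has size at most 32. -/
/-!
Let `u i` (`partialRow c i`) be the second row of `M_i(c₁, …, c_i)`. Its first row is
`u (i + 1)`, so `ω(u (i + 1), u i) = det M_i = 1` for `ω(u, w) = det (u; w)` (`wedge`), and the
continuant of a block `c_{i+1}, …, c_j` of `c` (the upper left entry of its matrix product) is
`ω(u (j + 1), u i)`. A block `s` with continuant `δ = ±1` extends by two entries to a
λ-quiddity `(x, s, y)` with `M = -δ Id`, which exhibits `c` as reducible. Hence in an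
irreducible `c` of length `n` no `ω(u j, u i)` with `2 ≤ j - i ≤ n - 2` is `±1`. Then the
`2 (n - 4)` vectors `±u p`, `3 ≤ p ≤ n - 2`, are pairwise distinct and both of their
coordinates `ω(u 1, ·)`, `ω(u 0, ·)` in the basis `u 0, u 1` avoid `±1`; over `𝔽_q` this gives
`2 (n - 4) ≤ (q - 2)²`, so `n ≤ 28` for `q = 9`.
-/

def wedge {A : Type*} [CommRing A] (u w : Fin 2 → A) : A := u 0 * w 1 - u 1 * w 0

def partialRow {A : Type*} [CommRing A] (c : List A) (i : ℕ) : Fin 2 → A := mProd (c.take i) 1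

section CommRing

variable {A : Type*} [CommRing A]

lemma mProd_append (s t : List A) : mProd (s ++ t) = mProd t * mProd s := by
  simp [mProd]

lemma mProd_singleton (a : A) : mProd [a] = mMat a := by
  simp [mProd]

lemma mProd_cons_append_singleton (x y : A) (s : List A) :
    mProd (x :: (s ++ [y])) = mMat y * mProd s * mMat x := by
  rw [← List.singleton_append, mProd_append, mProd_append, mProd_singleton, mProd_singleton,
    mul_assoc]

lemma det_mProd (l : List A) : (mProd l).det = 1 := by
  induction l with
  | nil => simp [mProd]
  | cons a l ih =>
    rw [← List.singleton_append, mProd_append, Matrix.det_mul, ih, mProd_singleton]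
    simp [mMat, Matrix.det_fin_two_of]

lemma mProd_take_add_one (l : List A) {i : ℕ} (hi : i < l.length) :
    mProd (l.take (i + 1)) = mMat l[i] * mProd (l.take i) := by
  rw [List.take_add_one, List.getElem?_eq_getElem hi, Option.toList_some, mProd_append,
    mProd_singleton]

lemma wedge_smul_left (σ : A) (u w : Fin 2 → A) : wedge (σ • u) w = σ * wedge u w := by
  simp only [wedge, Pi.smul_apply, smul_eq_mul]; ring

lemma wedge_smul_right (σ : A) (u w : Fin 2 → A) : wedge u (σ • w) = σ * wedge u w := by
  simp only [wedge, Pi.smul_apply, smul_eq_mul]; ring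

lemma wedge_comm (u w : Fin 2 → A) : wedge u w = -wedge w u := by
  simp only [wedge]; ring

lemma wedge_zero_right (u : Fin 2 → A) : wedge u 0 = 0 := by
  simp [wedge]

lemma wedge_rows (M : Matrix (Fin 2) (Fin 2) A) : wedge (M 0) (M 1) = M.det := by
  simp [wedge, Matrix.det_fin_two]

lemma eq_of_wedge_eq_of_wedge_eq {a b w w' : Fin 2 → A} (hab : wedge a b = 1)
    (ha : wedge a w = wedge a w') (hb : wedge b w = wedge b w') : w = w' := by
  simp only [wedge] at hab ha hb
  ext i
  fin_cases i <;> dsimp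
  · linear_combination -(w 0 - w' 0) * hab + b 0 * ha - a 0 * hb
  · linear_combination -(w 1 - w' 1) * hab + b 1 * ha - a 1 * hb

lemma partialRow_add_one (c : List A) {i : ℕ} (hi : i < c.length) :
    partialRow c (i + 1) = mProd (c.take i) 0 := by
  ext j
  simp [partialRow, mProd_take_add_one c hi, mMat, Matrix.mul_apply, Fin.sum_univ_two]

lemma wedge_partialRow_add_one (c : List A) {i : ℕ} (hi : i < c.length) :
    wedge (partialRow c (i + 1)) (partialRow c i) = 1 := by
  rw [partialRow_add_one c hi, partialRow, wedge_rows, det_mProd]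

lemma partialRow_ne_zero [Nontrivial A] (c : List A) {i : ℕ} (hi : i < c.length) :
    partialRow c i ≠ 0 := by
  intro h
  simpa [h, wedge_zero_right] using wedge_partialRow_add_one c hi

lemma mProd_drop_take_zero_zero (c : List A) {i k : ℕ} (hik : i + k < c.length) :
    mProd ((c.drop i).take k) 0 0 = wedge (partialRow c (i + k + 1)) (partialRow c i) := by
  have hdet := det_mProd (c.take i)
  rw [Matrix.det_fin_two] at hdet
  rw [partialRow_add_one c hik, List.take_add, mProd_append, partialRow]
  simp only [wedge, Matrix.mul_apply, Fin.sum_univ_two]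
  linear_combination (-mProd ((c.drop i).take k) 0 0) * hdet

lemma mMat_mul_mul_mMat (S : Matrix (Fin 2) (Fin 2) A) (hdet : S.det = 1)
    (hS : S 0 0 * S 0 0 = 1) :
    mMat (S 0 0 * S 1 0) * S * mMat (-(S 0 0 * S 0 1)) = (-S 0 0) • 1 := by
  rw [Matrix.det_fin_two] at hdet
  ext i j
  fin_cases i <;> fin_cases j <;>
    simp [mMat, Matrix.mul_apply, Matrix.vecMul, dotProduct, Fin.sum_univ_two]
  · linear_combination (S 1 1 - S 0 0 * S 1 0 * S 0 1) * hS - S 0 0 * hdet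
  · linear_combination -S 1 0 * hS
  · linear_combination -S 0 1 * hS

lemma oplus_cons_append (a b x y : A) (m s : List A) :
    oplus ((a - y) :: (m ++ [b - x])) (x :: (s ++ [y])) = a :: (m ++ b :: s) := by
  simp [oplus, List.getLast?_cons, List.dropLast_cons_of_ne_nil, List.getLast?_append]

theorem isReducible_of_rotate_eq_append (c s t : List A) (j : ℕ) (hc : c.rotate j = s ++ t)
    (hs : s ≠ []) (ht : 3 ≤ t.length) (h : mProd s 0 0 = 1 ∨ mProd s 0 0 = -1) :
    IsReducible Set.univ c := by
  obtain ⟨a, t', rfl⟩ := List.exists_cons_of_length_pos (by omega : 0 < t.length)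
  obtain rfl | ⟨m, b, rfl⟩ := List.eq_nil_or_concat t'
  · simp at ht
  set S := mProd s
  have hS : S 0 0 * S 0 0 = 1 := by rcases h with h | h <;> rw [h] <;> ring
  have hprod : mProd (-(S 0 0 * S 0 1) :: (s ++ [S 0 0 * S 1 0])) = (-S 0 0) • 1 := by
    rw [mProd_cons_append_singleton]
    exact mMat_mul_mul_mMat S (det_mProd s) hS
  refine ⟨(a - S 0 0 * S 1 0) :: (m ++ [b - -(S 0 0 * S 0 1)]),
    -(S 0 0 * S 0 1) :: (s ++ [S 0 0 * S 1 0]), ?_, ?_, fun _ _ => trivial,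
    ⟨fun _ _ => trivial, ?_⟩, Or.inl ⟨j + s.length, ?_⟩⟩
  · simpa using ht
  · simpa [Nat.one_le_iff_ne_zero] using hs
  · rw [hprod]
    rcases h with h | h <;> simp [h]
  · rw [oplus_cons_append, ← List.rotate_rotate, hc, List.rotate_append_length_eq]
    simp

theorem isReducible_of_wedge_partialRow (c : List A) {i j : ℕ} (hij : i + 2 ≤ j)
    (hj : j ≤ c.length) (hji : j + 2 ≤ i + c.length)
    (h : wedge (partialRow c j) (partialRow c i) = 1 ∨
      wedge (partialRow c j) (partialRow c i) = -1) :
    IsReducible Set.univ c := by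
  obtain ⟨k, rfl⟩ : ∃ k, j = i + k + 1 := ⟨j - i - 1, by omega⟩
  rw [← mProd_drop_take_zero_zero c (by omega)] at h
  refine isReducible_of_rotate_eq_append c _ ((c.drop i).drop k ++ c.take i) i ?_ ?_ ?_ h
  · rw [List.rotate_eq_drop_append_take (by omega), ← List.append_assoc, List.take_append_drop]
  · exact List.ne_nil_of_length_pos (by simp; omega)
  · simp only [List.length_append, List.length_drop, List.length_take]
    omega

lemma smul_partialRow_ne_smul_partialRow {c : List A} (hc : ¬ IsReducible Set.univ c)
    {p q : ℕ} {σ τ : A} (hσ : σ = 1 ∨ σ = -1) (hτ : τ = 1 ∨ τ = -1) (hp : 1 ≤ p)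
    (hpq : p < q) (hq : q ≤ c.length) (hqp : q + 3 ≤ p + c.length) :
    σ • partialRow c p ≠ τ • partialRow c q := by
  obtain ⟨p, rfl⟩ : ∃ p', p = p' + 1 := ⟨p - 1, by omega⟩
  intro h
  have hττ : τ * τ = 1 := by rcases hτ with rfl | rfl <;> norm_num
  have hrow : partialRow c q = (τ * σ) • partialRow c (p + 1) := by
    rw [mul_smul, h, smul_smul, hττ, one_smul]
  refine hc (isReducible_of_wedge_partialRow c (i := p) (j := q) (by omega) hq (by omega) ?_)
  rw [hrow, wedge_smul_left, wedge_partialRow_add_one c (by omega), mul_one]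
  rcases hσ with rfl | rfl <;> rcases hτ with rfl | rfl <;> norm_num

end CommRing

section Field

variable {F : Type*} [Field F]

lemma injOn_smul_partialRow {c : List F} (hc : ¬ IsReducible Set.univ c) :
    Set.InjOn (fun x : ℕ × F => x.2 • partialRow c x.1)
      (Set.Icc 2 (c.length - 2) ×ˢ {1, -1}) := by
  rintro ⟨p, σ⟩ ⟨hp, hσ⟩ ⟨q, τ⟩ ⟨hq, hτ⟩ h
  simp only [Set.mem_Icc, Set.mem_insert_iff, Set.mem_singleton_iff] at hp hσ hq hτ h
  rcases lt_trichotomy p q with hpq | rfl | hqp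
  · exact absurd h
      (smul_partialRow_ne_smul_partialRow hc hσ hτ (by omega) hpq (by omega) (by omega))
  · exact Prod.ext rfl (smul_left_injective F (partialRow_ne_zero c (by omega)) h)
  · exact absurd h.symm
      (smul_partialRow_ne_smul_partialRow hc hτ hσ (by omega) hqp (by omega) (by omega))

theorem two_mul_length_sub_four_le [Fintype F] (h2 : (2 : F) ≠ 0) (c : List F)
    (hc : ¬ IsReducible Set.univ c) :
    2 * (c.length - 4) ≤ (Fintype.card F - 2) ^ 2 := by
  classical
  set n := c.length
  rcases le_or_gt n 4 with hn | hn
  · simp [Nat.sub_eq_zero_of_le hn]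
  set u := partialRow c
  set S : Finset F := {1, -1}
  have hS : S.card = 2 := Finset.card_pair fun h => h2 (by linear_combination h)
  have hfar : ∀ i j, i + 2 ≤ j → j ≤ n → j + 2 ≤ i + n → wedge (u j) (u i) ∉ S :=
    fun i j hij hj hji hmem =>
      hc (isReducible_of_wedge_partialRow c hij hj hji (by simpa [S] using hmem))
  let f : ℕ × F → F × F := fun x => (wedge (u 1) (x.2 • u x.1), wedge (u 0) (x.2 • u x.1))
  have hmaps : Set.MapsTo f ↑(Finset.Icc 3 (n - 2) ×ˢ S) ↑(Sᶜ ×ˢ Sᶜ) := by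
    rintro ⟨p, σ⟩ hx
    simp only [Finset.mem_coe, Finset.mem_product, Finset.mem_Icc] at hx
    obtain ⟨⟨hp3, hpn⟩, hσ⟩ := hx
    have h0 := hfar 0 p (by omega) (by omega) (by omega)
    have h1 := hfar 1 p (by omega) (by omega) (by omega)
    simp only [f, wedge_smul_right, Finset.mem_coe, Finset.mem_product, Finset.mem_compl]
    rw [wedge_comm (u 0), wedge_comm (u 1)]
    simp only [S, Finset.mem_insert, Finset.mem_singleton] at hσ h0 h1 ⊢
    rcases hσ with rfl | rfl <;> grind
  have hinj : Set.InjOn f ↑(Finset.Icc 3 (n - 2) ×ˢ S) := by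
    have hφ : Function.Injective fun w => (wedge (u 1) w, wedge (u 0) w) :=
      fun w w' h => eq_of_wedge_eq_of_wedge_eq (wedge_partialRow_add_one c (i := 0) (by omega))
        (congrArg Prod.fst h) (congrArg Prod.snd h)
    refine hφ.comp_injOn ((injOn_smul_partialRow hc).mono ?_)
    intro x hx
    simp only [Finset.mem_coe, Finset.mem_product, Finset.mem_Icc, S, Finset.mem_insert,
      Finset.mem_singleton, Set.mem_prod, Set.mem_Icc, Set.mem_insert_iff,
      Set.mem_singleton_iff] at hx ⊢
    exact ⟨⟨by omega, by omega⟩, hx.2⟩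
  calc 2 * (n - 4) = (Finset.Icc 3 (n - 2) ×ˢ S).card := by
        rw [Finset.card_product, Nat.card_Icc, hS]; omega
    _ ≤ (Sᶜ ×ˢ Sᶜ).card := Finset.card_le_card_of_injOn f hmaps hinj
    _ = (Fintype.card F - 2) ^ 2 := by rw [Finset.card_product, Finset.card_compl, hS, sq]

end Field

/-- Every irreducible λ-quiddity over the field with 9 elements has size at most 32. -/
theorem stmt19 {F : Type*} [Field F] [Fintype F] (hF : Fintype.card F = 9)
    (c : List F) (hc : IrreducibleQuiddity (Set.univ : Set F) c) :
    c.length ≤ 32 := by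
  have h2 : (2 : F) ≠ 0 :=
    Ring.two_ne_zero (by rw [Ne, FiniteField.even_card_iff_char_two, hF]; decide)
  have h := two_mul_length_sub_four_le h2 c hc.2.2
  rw [hF] at h
  norm_num at h
  omega
end
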